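/- Let T : h → g be a nonabelian embedding tensor on a Lie algebra g with respect to a coherent action (h;ρ), and let x ∈ g be a Nijenhuis element associated to T. Then ρ(x) : h → h is a Nijenhuis operator on the descendent Leibniz algebra (h,[-,-]_T), where [u,v]_T = ρ(Tu)v + [u,v]_h; that is, for all u,v ∈ h: [ρ(x)u, ρ(x)v]_T = ρ(x)([ρ(x)u, v]_T + [u, ρ(x)v]_T − ρ(x)[u,v]_T). -/
import Mathlib


variable {k : Type*} [Field k]
variable {g : Type*} [LieRing g] [LieAlgebra k g]
variable {h : Type*} [LieRing h] [LieAlgebra k h]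

/-- The descendent bracket `[u,v]_T = ρ(Tu)v + [u,v]_h`. -/
def descBracket (ρ : g →ₗ[k] h →ₗ[k] h) (T : h →ₗ[k] g) (u v : h) : h :=
  ρ (T u) v + ⁅u, v⁆

/-- if `x` is a Nijenhuis element associated to a nonabelian embedding tensor
`T`, then `ρ(x)` is a Nijenhuis operator on the descendent Leibniz algebra `(h,[-,-]_T)`. -/
theorem nijenhuis_element_operator (ρ : g →ₗ[k] h →ₗ[k] h)
    (hρ_der : ∀ (x : g) (u v : h), ρ x ⁅u, v⁆ = ⁅ρ x u, v⁆ + ⁅u, ρ x v⁆)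
    (hρ_hom : ∀ (x y : g) (u : h), ρ ⁅x, y⁆ u = ρ x (ρ y u) - ρ y (ρ x u))
    (hρ_coh : ∀ (x : g) (u v : h), ⁅ρ x u, v⁆ = (0 : h))
    (T : h →ₗ[k] g)
    (hT : ∀ u v : h, ⁅T u, T v⁆ = T (ρ (T u) v + ⁅u, v⁆))
    (x : g)
    (hNij1 : ∀ y z : g, ⁅⁅x, y⁆, ⁅x, z⁆⁆ = (0 : g))
    (hNij2 : ∀ (y : g) (u : h), ρ ⁅x, y⁆ (ρ x u) = (0 : h))
    (hNij3 : ∀ u : h, ⁅x, T (ρ x u) - ⁅x, T u⁆⁆ = (0 : g)) :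
    ∀ u v : h,
      descBracket ρ T (ρ x u) (ρ x v) =
        ρ x (descBracket ρ T (ρ x u) v + descBracket ρ T u (ρ x v) -
          ρ x (descBracket ρ T u v)) := by
  intro u v
  have hder : ρ x ⁅u, v⁆ = ⁅u, ρ x v⁆ := by rw [hρ_der, hρ_coh, zero_add]
  have h1 : ρ ⁅x, T u⁆ v = ρ x (ρ (T u) v) - ρ (T u) (ρ x v) := hρ_hom x (T u) v
  have h2 : ρ ⁅x, T u⁆ (ρ x v) = 0 := hNij2 (T u) v
  -- key commutation from hNij3
  have h0 : ρ ⁅x, T (ρ x u) - ⁅x, T u⁆⁆ v = 0 := by rw [hNij3]; simp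
  have h3 : ρ x (ρ (T (ρ x u)) v) - ρ x (ρ ⁅x, T u⁆ v) = ρ (T (ρ x u)) (ρ x v) := by
    have hc := hρ_hom x (T (ρ x u) - ⁅x, T u⁆) v
    rw [h0] at hc
    have hc' := (sub_eq_zero.mp hc.symm)
    simp only [map_sub, LinearMap.sub_apply] at hc'
    rw [h2, sub_zero] at hc'
    rw [← hc']
  simp only [descBracket, hρ_coh, add_zero, map_add, map_sub, hder, h1]
  rw [← h3, h1, map_sub]
  abel
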